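/- For any real Clifford algebra C_{t,s}, the tensor product C_{t,s} ⊗_ℝ C_{0,2} is isomorphic as an ℝ-algebra to C_{s,t+2}. -/

import Mathlib

/-- The quadratic form of signature (t,s) on ℝ^(t+s). -/
noncomputable def Qsig (t s : ℕ) : QuadraticForm ℝ (Fin (t + s) → ℝ) :=
  QuadraticMap.weightedSumSquares ℝ (fun i : Fin (t + s) => if (i : ℕ) < t then (1 : ℝ) else -1)

/-- The real Clifford algebra C_{t,s}. -/
noncomputable abbrev Cl (t s : ℕ) := CliffordAlgebra (Qsig t s)

open scoped TensorProduct

/-!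
Let `y₀, y₁` be the generators of `C_{0,2}` and `ω = y₀ y₁`; then `ω² = -1` and `ω` anticommutes
with `y₀` and `y₁`. Hence in `C_{t,s} ⊗ C_{0,2}` the elements `eᵢ ⊗ ω` (with `(eᵢ ⊗ ω)² = -eᵢ²`)
and `1 ⊗ y₀, 1 ⊗ y₁` pairwise anticommute, so they define a map out of the Clifford algebra
of the diagonal form with the signs of `C_{t,s}` flipped and two extra entries `-1`, i.e.
`C_{s,t+2}`. Conversely, if `f₀, f₁` are the last two generators there and `ε = f₀ f₁`, then
`eᵢ ↦ -fᵢ ε` and `yⱼ ↦ fⱼ` commute with each other and invert that map. None of this needs more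
than a diagonal form over a commutative ring.
-/

section Anticommute

variable {A : Type*} [Ring A] {a b c : A}

theorem commute_mul_of_anticomm (hca : c * a = -(a * c)) (hcb : c * b = -(b * c)) :
    Commute c (a * b) :=
  calc c * (a * b) = -(a * (c * b)) := by rw [← mul_assoc, hca, neg_mul, mul_assoc]
    _ = a * b * c := by rw [hcb, mul_neg, neg_neg, mul_assoc]

theorem mul_mul_self_of_anticomm (ha : a * a = -1) (hb : b * b = -1) (hab : a * b = -(b * a)) :
    a * b * (a * b) = -1 := by
  rw [mul_assoc, ← mul_assoc b, ← neg_neg (b * a), ← hab, neg_mul, mul_neg, mul_assoc, hb,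
    ← mul_assoc, ha]
  simp

theorem mul_mul_anticomm_left (hab : a * b = -(b * a)) : a * b * a = -(a * (a * b)) := by
  rw [mul_assoc, ← neg_neg (b * a), ← hab, mul_neg]

theorem mul_mul_anticomm_right (hab : a * b = -(b * a)) : a * b * b = -(b * (a * b)) := by
  calc a * b * b = -(b * a) * b := by rw [hab]
    _ = -(b * (a * b)) := by rw [neg_mul, mul_assoc]

theorem Finset.sum_mul_sum_self_of_anticomm {ι : Type*} [DecidableEq ι] (s : Finset ι) (f : ι → A)
    (hf : ∀ i ∈ s, ∀ j ∈ s, i ≠ j → f i * f j = -(f j * f i)) :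
    (∑ i ∈ s, f i) * (∑ i ∈ s, f i) = ∑ i ∈ s, f i * f i := by
  induction s using Finset.induction_on with
  | empty => simp
  | insert i s hi ih =>
    have hcross : f i * ∑ j ∈ s, f j + (∑ j ∈ s, f j) * f i = 0 := by
      rw [Finset.mul_sum, Finset.sum_mul, ← Finset.sum_add_distrib]
      refine Finset.sum_eq_zero fun j hj => ?_
      rw [hf i (by simp) j (by simp [hj]) (by rintro rfl; exact hi hj), neg_add_cancel]
    rw [Finset.sum_insert hi, Finset.sum_insert hi, ← ih fun j hj k hk =>
      hf j (by simp [hj]) k (by simp [hk])]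
    rw [add_mul, mul_add, mul_add, ← add_assoc, add_assoc (f i * f i), hcross]
    abel

end Anticommute

namespace CliffordAlgebra

open QuadraticMap

variable {R A κ : Type*} [CommRing R] [Ring A] [Algebra R A] [Fintype κ] [DecidableEq κ]

def gen (Q : QuadraticForm R (κ → R)) (i : κ) : CliffordAlgebra Q := ι Q (Pi.single i 1)

theorem algHom_ext_gen {Q : QuadraticForm R (κ → R)} {f g : CliffordAlgebra Q →ₐ[R] A}
    (h : ∀ i, f (gen Q i) = g (gen Q i)) : f = g :=
  hom_ext <| (Pi.basisFun R κ).ext fun i => by simpa [gen] using h i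

theorem commute_of_forall_gen {Q : QuadraticForm R (κ → R)} (f : CliffordAlgebra Q →ₐ[R] A)
    {a : A} (h : ∀ i, Commute (f (gen Q i)) a) (x : CliffordAlgebra Q) : Commute (f x) a := by
  induction x using CliffordAlgebra.induction with
  | algebraMap r => simpa using Algebra.commute_algebraMap_left r a
  | ι v =>
    rw [← (Pi.basisFun R κ).sum_repr v, map_sum, map_sum]
    exact Commute.sum_left _ _ _ fun i _ => by simpa [gen] using (h i).smul_left (v i)
  | mul x y hx hy => simpa using hx.mul_left hy
  | add x y hx hy => simpa using hx.add_left hy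

variable (w : κ → R)

theorem gen_mul_self (i : κ) :
    gen (weightedSumSquares R w) i * gen _ i = algebraMap R _ (w i) := by
  simp [gen, ι_sq_scalar, weightedSumSquares_apply, Pi.single_apply]

theorem gen_mul_gen_of_ne {i j : κ} (h : i ≠ j) :
    gen (weightedSumSquares R w) i * gen _ j = -(gen _ j * gen _ i) := by
  refine eq_neg_of_add_eq_zero_left ?_
  have hpolar : polar (weightedSumSquares R w) (Pi.single i 1) (Pi.single j 1) = 0 := by
    simp only [polar, weightedSumSquares_apply, Pi.add_apply, smul_eq_mul]
    rw [Fintype.sum_eq_add i j h fun k hk => by simp [hk.1, hk.2]]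
    simp [h, h.symm, Pi.single_apply]
  rw [gen, gen, ι_mul_ι_add_swap, hpolar, map_zero]

def liftGen (g : κ → A) (hsq : ∀ i, g i * g i = algebraMap R A (w i))
    (hanti : ∀ i j, i ≠ j → g i * g j = -(g j * g i)) :
    CliffordAlgebra (weightedSumSquares R w) →ₐ[R] A :=
  lift _ ⟨Fintype.linearCombination R g, fun v => by
    rw [Fintype.linearCombination_apply, Finset.sum_mul_sum_self_of_anticomm _ _
      fun i _ j _ hij => by
        rw [smul_mul_smul_comm, smul_mul_smul_comm, hanti i j hij, smul_neg, mul_comm],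
      weightedSumSquares_apply, map_sum]
    refine Finset.sum_congr rfl fun i _ => ?_
    rw [smul_mul_smul_comm, hsq, Algebra.smul_def, ← map_mul, smul_eq_mul, mul_comm]⟩

@[simp]
theorem liftGen_gen (g : κ → A) (hsq) (hanti) (i : κ) : liftGen w g hsq hanti (gen _ i) = g i := by
  simp [liftGen, gen]

theorem gen_mul_self_of_eq_neg_one {i : κ} (hi : w i = -1) :
    gen (weightedSumSquares R w) i * gen _ i = -1 := by
  rw [gen_mul_self, hi, map_neg, map_one]

theorem gen_mul_gen_mul_anticomm {a b i : κ} (hab : a ≠ b) (hi : i = a ∨ i = b) :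
    gen (weightedSumSquares R w) a * gen _ b * gen _ i = -(gen _ i * (gen _ a * gen _ b)) := by
  rcases hi with rfl | rfl
  · exact mul_mul_anticomm_left (gen_mul_gen_of_ne w hab)
  · exact mul_mul_anticomm_right (gen_mul_gen_of_ne w hab)

section TensorQuaternion

open Algebra.TensorProduct

local notation "𝒬" => weightedSumSquares R w
local notation "ℋ" => weightedSumSquares R (fun _ : Fin 2 => (-1 : R))
local notation "𝒬'" => weightedSumSquares R (Sum.elim (-w) fun _ : Fin 2 => (-1 : R))
local notation "ω" => (gen ℋ 0 * gen ℋ 1 : CliffordAlgebra ℋ)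
local notation "ε" => (gen 𝒬' (Sum.inr 0) * gen 𝒬' (Sum.inr 1) : CliffordAlgebra 𝒬')

theorem ω_mul_self : ω * ω = (-1 : CliffordAlgebra ℋ) :=
  mul_mul_self_of_anticomm (gen_mul_self_of_eq_neg_one _ rfl) (gen_mul_self_of_eq_neg_one _ rfl)
    (gen_mul_gen_of_ne _ (by decide))

theorem ε_mul_self : ε * ε = -1 :=
  mul_mul_self_of_anticomm (gen_mul_self_of_eq_neg_one _ rfl) (gen_mul_self_of_eq_neg_one _ rfl)
    (gen_mul_gen_of_ne _ (by simp))

theorem ω_anticomm (j : Fin 2) : ω * gen ℋ j = -(gen ℋ j * ω) :=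
  gen_mul_gen_mul_anticomm _ (by decide) (by fin_cases j <;> simp)

theorem ε_anticomm (j : Fin 2) : gen 𝒬' (Sum.inr j) * ε = -(ε * gen 𝒬' (Sum.inr j)) :=
  (neg_eq_iff_eq_neg.mpr
    (gen_mul_gen_mul_anticomm _ (by simp) (by fin_cases j <;> simp))).symm

def toTensorGen : κ ⊕ Fin 2 → CliffordAlgebra 𝒬 ⊗[R] CliffordAlgebra ℋ :=
  Sum.elim (fun i => gen 𝒬 i ⊗ₜ ω) (fun j => 1 ⊗ₜ gen ℋ j)

theorem toTensorGen_mul_self (x : κ ⊕ Fin 2) :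
    toTensorGen w x * toTensorGen w x = algebraMap R _ (Sum.elim (-w) (fun _ => -1) x) := by
  rcases x with i | j
  · simp [toTensorGen, gen_mul_self, ω_mul_self, Algebra.TensorProduct.algebraMap_apply,
      TensorProduct.tmul_neg, TensorProduct.neg_tmul]
  · simp [toTensorGen, gen_mul_self, Algebra.TensorProduct.algebraMap_apply,
      TensorProduct.tmul_neg, TensorProduct.neg_tmul]

theorem toTensorGen_anticomm (x y : κ ⊕ Fin 2) (hxy : x ≠ y) :
    toTensorGen w x * toTensorGen w y = -(toTensorGen w y * toTensorGen w x) := by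
  rcases x with i | j <;> rcases y with i' | j'
  · simp only [toTensorGen, Sum.elim_inl, tmul_mul_tmul,
      gen_mul_gen_of_ne w (Sum.inl_injective.ne_iff.mp hxy), TensorProduct.neg_tmul]
  · simp only [toTensorGen, Sum.elim_inl, Sum.elim_inr, tmul_mul_tmul, mul_one, one_mul,
      ω_anticomm, TensorProduct.tmul_neg]
  · simp only [toTensorGen, Sum.elim_inl, Sum.elim_inr, tmul_mul_tmul, mul_one, one_mul,
      ω_anticomm, TensorProduct.tmul_neg, neg_neg]
  · simp only [toTensorGen, Sum.elim_inr, tmul_mul_tmul, mul_one,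
      gen_mul_gen_of_ne _ (Sum.inr_injective.ne_iff.mp hxy), TensorProduct.tmul_neg]

def toTensor : CliffordAlgebra 𝒬' →ₐ[R] CliffordAlgebra 𝒬 ⊗[R] CliffordAlgebra ℋ :=
  liftGen _ (toTensorGen w) (toTensorGen_mul_self w) (toTensorGen_anticomm w)

theorem commute_gen_inl_ε (i : κ) : Commute (gen 𝒬' (Sum.inl i)) ε :=
  commute_mul_of_anticomm (gen_mul_gen_of_ne _ (by simp)) (gen_mul_gen_of_ne _ (by simp))

/-- The sign makes `toTensor (ofTensorLeftGen w i) = -(eᵢ ⊗ ω) (1 ⊗ ω) = eᵢ ⊗ 1`. -/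
def ofTensorLeftGen (i : κ) : CliffordAlgebra 𝒬' := -(gen 𝒬' (Sum.inl i) * ε)

theorem ofTensorLeftGen_mul_self (i : κ) :
    ofTensorLeftGen w i * ofTensorLeftGen w i = algebraMap R _ (w i) := by
  rw [ofTensorLeftGen, neg_mul_neg, (commute_gen_inl_ε w i).symm.mul_mul_mul_comm, ε_mul_self,
    gen_mul_self]
  simp

theorem ofTensorLeftGen_anticomm (i j : κ) (hij : i ≠ j) :
    ofTensorLeftGen w i * ofTensorLeftGen w j = -(ofTensorLeftGen w j * ofTensorLeftGen w i) := by
  rw [ofTensorLeftGen, ofTensorLeftGen, neg_mul_neg, neg_mul_neg,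
    (commute_gen_inl_ε w i).symm.mul_mul_mul_comm,
    (commute_gen_inl_ε w j).symm.mul_mul_mul_comm, gen_mul_gen_of_ne _ (by simpa using hij),
    neg_mul]

def ofTensorLeft : CliffordAlgebra 𝒬 →ₐ[R] CliffordAlgebra 𝒬' :=
  liftGen w (ofTensorLeftGen w) (ofTensorLeftGen_mul_self w) (ofTensorLeftGen_anticomm w)

def ofTensorRight : CliffordAlgebra ℋ →ₐ[R] CliffordAlgebra 𝒬' :=
  liftGen _ (fun j => gen 𝒬' (Sum.inr j)) (fun j => by rw [gen_mul_self]; rfl)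
    (fun _ _ h => gen_mul_gen_of_ne _ (Sum.inr_injective.ne h))

@[simp]
theorem ofTensorLeft_gen (i : κ) : ofTensorLeft w (gen 𝒬 i) = ofTensorLeftGen w i :=
  liftGen_gen ..

@[simp]
theorem ofTensorRight_gen (j : Fin 2) : ofTensorRight w (gen ℋ j) = gen 𝒬' (Sum.inr j) :=
  liftGen_gen ..

theorem commute_ofTensorLeft_ofTensorRight (x : CliffordAlgebra 𝒬) (y : CliffordAlgebra ℋ) :
    Commute (ofTensorLeft w x) (ofTensorRight w y) := by
  have hgen (i : κ) (j : Fin 2) :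
      Commute (ofTensorLeft w (gen 𝒬 i)) (ofTensorRight w (gen ℋ j)) := by
    rw [ofTensorLeft_gen, ofTensorRight_gen, ofTensorLeftGen]
    exact (commute_mul_of_anticomm (gen_mul_gen_of_ne _ (by simp)) (ε_anticomm w j)).symm.neg_left
  exact commute_of_forall_gen _ (fun i =>
    (commute_of_forall_gen _ (fun j => (hgen i j).symm) y).symm) x

def ofTensor : CliffordAlgebra 𝒬 ⊗[R] CliffordAlgebra ℋ →ₐ[R] CliffordAlgebra 𝒬' :=
  Algebra.TensorProduct.lift (ofTensorLeft w) (ofTensorRight w)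
    (commute_ofTensorLeft_ofTensorRight w)

@[simp]
theorem toTensor_gen (x : κ ⊕ Fin 2) : toTensor w (gen 𝒬' x) = toTensorGen w x :=
  liftGen_gen ..

theorem ofTensorRight_ω : ofTensorRight w ω = ε := by
  rw [map_mul, ofTensorRight_gen, ofTensorRight_gen]

theorem ofTensor_comp_toTensor : (ofTensor w).comp (toTensor w) = AlgHom.id R _ := by
  refine algHom_ext_gen fun x => ?_
  rcases x with i | j
  · rw [AlgHom.comp_apply, toTensor_gen, toTensorGen, Sum.elim_inl, ofTensor, lift_tmul,
      ofTensorLeft_gen, ofTensorLeftGen, ofTensorRight_ω, neg_mul, mul_assoc, ε_mul_self,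
      mul_neg_one, neg_neg, AlgHom.id_apply]
  · rw [AlgHom.comp_apply, toTensor_gen, toTensorGen, Sum.elim_inr, ofTensor, lift_tmul, map_one,
      one_mul, ofTensorRight_gen, AlgHom.id_apply]

theorem toTensor_comp_ofTensor : (toTensor w).comp (ofTensor w) = AlgHom.id R _ := by
  ext : 1
  · refine algHom_ext_gen fun i => ?_
    simp [ofTensor, ofTensorLeftGen, toTensorGen, ω_mul_self, TensorProduct.tmul_neg]
  · refine algHom_ext_gen fun j => ?_
    simp [ofTensor, toTensorGen]

def tensorQuaternionEquiv : CliffordAlgebra 𝒬 ⊗[R] CliffordAlgebra ℋ ≃ₐ[R] CliffordAlgebra 𝒬' :=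
  AlgEquiv.ofAlgHom (ofTensor w) (toTensor w) (ofTensor_comp_toTensor w) (toTensor_comp_ofTensor w)

end TensorQuaternion

end CliffordAlgebra

namespace QuadraticForm

variable {R κ κ' : Type*} [CommRing R] [Fintype κ] [Fintype κ']

def weightedSumSquaresReindex {w : κ → R} {w' : κ' → R} (e : κ ≃ κ') (h : ∀ i, w' (e i) = w i) :
    (QuadraticMap.weightedSumSquares R w).IsometryEquiv (QuadraticMap.weightedSumSquares R w') where
  toLinearEquiv := LinearEquiv.funCongrLeft R R e.symm
  map_app' v := by
    simp only [QuadraticMap.weightedSumSquares_apply, ← e.sum_comp, h]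
    simp

end QuadraticForm

def signatureSwapEquiv (t s : ℕ) : Fin (t + s) ⊕ Fin 2 ≃ Fin (s + (t + 2)) :=
  (Equiv.sumCongr (finSumFinEquiv.symm.trans (Equiv.sumComm _ _)) (Equiv.refl _)).trans <|
    (Equiv.sumAssoc _ _ _).trans <| (Equiv.sumCongr (Equiv.refl _) finSumFinEquiv).trans
      finSumFinEquiv

theorem signatureSwapEquiv_weight (t s : ℕ) (x : Fin (t + s) ⊕ Fin 2) :
    (if (signatureSwapEquiv t s x : ℕ) < s then (1 : ℝ) else -1) =
      Sum.elim (-fun i : Fin (t + s) => if (i : ℕ) < t then (1 : ℝ) else -1) (fun _ => -1) x := by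
  rcases x with i | j
  · induction i using Fin.addCases with
    | left i => simp [signatureSwapEquiv]
    | right i => simp [signatureSwapEquiv]
  · simp [signatureSwapEquiv]

open QuadraticMap in
/-- C_{t,s} ⊗_ℝ C_{0,2} ≅ C_{s,t+2}. -/
theorem stmt_7 (t s : ℕ) : Nonempty ((Cl t s ⊗[ℝ] Cl 0 2) ≃ₐ[ℝ] Cl s (t + 2)) := by
  let w : Fin (t + s) → ℝ := fun i => if (i : ℕ) < t then 1 else -1
  let e₁ : Cl 0 2 ≃ₐ[ℝ] CliffordAlgebra (weightedSumSquares ℝ fun _ : Fin 2 => (-1 : ℝ)) :=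
    CliffordAlgebra.equivOfIsometry
      (QuadraticForm.weightedSumSquaresCongr (funext fun i => if_neg i.val.not_lt_zero))
  let e₂ : CliffordAlgebra (weightedSumSquares ℝ (Sum.elim (-w) fun _ => -1)) ≃ₐ[ℝ] Cl s (t + 2) :=
    CliffordAlgebra.equivOfIsometry
      (QuadraticForm.weightedSumSquaresReindex _ (signatureSwapEquiv_weight t s))
  exact ⟨(Algebra.TensorProduct.congr (AlgEquiv.refl : Cl t s ≃ₐ[ℝ] Cl t s) e₁).trans
    ((CliffordAlgebra.tensorQuaternionEquiv w).trans e₂)⟩
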